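/- The periodic unfolding operator satisfies the exact integration formula: for every φ ∈ L¹(Ω), (1/|Y|) ∫_{Ω×Y} T_ε(φ)(x,y) dx dy = ∫_{Ω_ε⁻} φ(x) dx = ∫_Ω φ dx − ∫_{Λ_ε⁻} φ dx. -/

import Mathlib

open MeasureTheory Set Filter

/-- The reference cell `Y = (−1/2, 1/2]³`. -/
def Ycell : Set (Fin 3 → ℝ) := {y | ∀ i, y i ∈ Set.Ioc (-(1/2) : ℝ) (1/2)}

/-- Integer-part map `[·]_Y : ℝ → ℤ` adapted to `Y = (−1/2,1/2]`: `z − [z]_Y ∈ (−1/2,1/2]`. -/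
noncomputable def nint (z : ℝ) : ℤ := ⌈z - 1/2⌉

/-- The cell `ε(ℓ + Y)`. -/
def cellY (ε : ℝ) (ℓ : Fin 3 → ℤ) : Set (Fin 3 → ℝ) :=
  {x | ∀ i, x i ∈ Set.Ioc (ε * ((ℓ i : ℝ) - 1/2)) (ε * ((ℓ i : ℝ) + 1/2))}

/-- `Ω_ε⁻`: the union of the ε-cells entirely contained in `Ω`. -/
def OmegaMinus (Ω : Set (Fin 3 → ℝ)) (ε : ℝ) : Set (Fin 3 → ℝ) :=
  ⋃ ℓ ∈ {ℓ : Fin 3 → ℤ | cellY ε ℓ ⊆ Ω}, cellY ε ℓ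

/-- The periodic unfolding operator `T_ε`:
`T_ε(φ)(x,y) = φ(ε[x/ε]_Y + εy)` on `Ω_ε⁻ × Y` and `0` on `(Ω \ Ω_ε⁻) × Y`. -/
noncomputable def unfold (ε : ℝ) (Ω : Set (Fin 3 → ℝ)) (φ : (Fin 3 → ℝ) → ℝ)
    (x y : Fin 3 → ℝ) : ℝ :=
  (OmegaMinus Ω ε).indicator (fun x => φ (fun i => ε * (nint (x i / ε) : ℝ) + ε * y i)) x

/-!
On an ε-cell `ε(ℓ + Y) ⊆ Ω` the inner integral `x ↦ ∫_Y T_ε(φ)(x, y) dy` is constant: the change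
of variables `z = εℓ + εy` identifies it with the average of `φ` over that cell. Off `Ω_ε⁻` it
vanishes. Replacing a function by its averages over the pieces of a countable disjoint family of
sets of finite measure does not change its integral over their union; the averaged function is
integrable there because its integral in norm over each piece is at most that of the original one.
-/

open Function Pointwise

section CellAverage

variable {X E ι : Type*} [MeasurableSpace X] [NormedAddCommGroup E] [NormedSpace ℝ E]
  [CompleteSpace E] {μ : Measure X} [Countable ι] {s : ι → Set X}

theorem setIntegral_iUnion_of_eqOn_setAverage (hm : ∀ i, MeasurableSet (s i))
    (hd : Pairwise (Disjoint on s)) (hfin : ∀ i, μ (s i) ≠ ⊤) {f g : X → E}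
    (hf : IntegrableOn f (⋃ i, s i) μ) (hg : ∀ i, EqOn g (fun _ => ⨍ a in s i, f a ∂μ) (s i)) :
    ∫ x in ⋃ i, s i, g x ∂μ = ∫ x in ⋃ i, s i, f x ∂μ := by
  have hg_int : ∀ i, IntegrableOn g (s i) μ := fun i =>
    (integrableOn_const (hfin i)).congr_fun (hg i).symm (hm i)
  have hg_norm : ∀ i, ∫ x in s i, ‖g x‖ ∂μ ≤ ∫ x in s i, ‖f x‖ ∂μ := fun i => calc
    ∫ x in s i, ‖g x‖ ∂μ = ‖μ.real (s i) • ⨍ a in s i, f a ∂μ‖ := by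
      rw [setIntegral_congr_fun (hm i) fun x hx => congrArg norm (hg i hx), setIntegral_const,
        norm_smul, Real.norm_of_nonneg measureReal_nonneg, smul_eq_mul]
    _ = ‖∫ x in s i, f x ∂μ‖ := by rw [measure_smul_setAverage _ (hfin i)]
    _ ≤ ∫ x in s i, ‖f x‖ ∂μ := norm_integral_le_integral_norm _
  have hg_union : IntegrableOn g (⋃ i, s i) μ :=
    integrableOn_iUnion_of_summable_integral_norm hg_int <|
      .of_nonneg_of_le (fun _ => integral_nonneg fun _ => norm_nonneg _) hg_norm
        (hasSum_integral_iUnion hm hd hf.norm).summable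
  rw [integral_iUnion hm hd hg_union, integral_iUnion hm hd hf]
  refine tsum_congr fun i => ?_
  rw [setIntegral_congr_fun (hm i) (hg i), setIntegral_const, measure_smul_setAverage _ (hfin i)]

end CellAverage

section Cells

variable {ε : ℝ}

theorem cellY_eq_pi (ε : ℝ) (ℓ : Fin 3 → ℤ) :
    cellY ε ℓ = univ.pi fun i => Ioc (ε * ((ℓ i : ℝ) - 1/2)) (ε * ((ℓ i : ℝ) + 1/2)) := by
  ext x; simp [cellY, Set.mem_pi]

theorem cellY_one_zero : cellY 1 0 = Ycell := by
  ext y; simp [cellY, Ycell]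

theorem measurableSet_cellY (ε : ℝ) (ℓ : Fin 3 → ℤ) : MeasurableSet (cellY ε ℓ) := by
  rw [cellY_eq_pi]; exact .univ_pi fun _ => measurableSet_Ioc

theorem volume_cellY (hε : 0 ≤ ε) (ℓ : Fin 3 → ℤ) :
    volume (cellY ε ℓ) = ENNReal.ofReal (ε ^ 3) := by
  simp_rw [cellY_eq_pi, Real.volume_pi_Ioc]
  have hside : ∀ i : Fin 3, ε * ((ℓ i : ℝ) + 1/2) - ε * ((ℓ i : ℝ) - 1/2) = ε := fun i => by ring
  simp_rw [hside, Finset.prod_const, Finset.card_univ, Fintype.card_fin, ENNReal.ofReal_pow hε]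

theorem volume_Ycell : volume Ycell = 1 := by
  simp [← cellY_one_zero, volume_cellY zero_le_one]

theorem nint_div_eq_of_mem_cellY (hε : 0 < ε) {ℓ : Fin 3 → ℤ} {x : Fin 3 → ℝ}
    (hx : x ∈ cellY ε ℓ) (i : Fin 3) : nint (x i / ε) = ℓ i := by
  obtain ⟨hlo, hhi⟩ := hx i
  have hlo' : (ℓ i : ℝ) - 1/2 < x i / ε := by rw [lt_div_iff₀ hε]; linarith
  have hhi' : x i / ε ≤ (ℓ i : ℝ) + 1/2 := by rw [div_le_iff₀ hε]; linarith
  rw [nint, Int.ceil_eq_iff]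
  constructor <;> linarith

theorem pairwise_disjoint_cellY (hε : 0 < ε) : Pairwise (Disjoint on cellY ε) :=
  fun ℓ ℓ' hne => disjoint_left.2 fun _ hx hx' => hne <| funext fun i => by
    rw [← nint_div_eq_of_mem_cellY hε hx i, ← nint_div_eq_of_mem_cellY hε hx' i]

theorem setIntegral_Ycell_comp_cellY {E : Type*} [NormedAddCommGroup E] [NormedSpace ℝ E]
    (hε : 0 < ε) (ℓ : Fin 3 → ℤ) (φ : (Fin 3 → ℝ) → E) :
    ∫ y in Ycell, φ (fun i => ε * ℓ i + ε * y i) = ⨍ x in cellY ε ℓ, φ x := by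
  set c : Fin 3 → ℝ := fun i => ε * ℓ i
  have hscale : ε • Ycell = (c + ·) ⁻¹' cellY ε ℓ := by
    ext z
    simp only [mem_smul_set_iff_inv_smul_mem₀ hε.ne', Ycell, cellY, mem_ofPred_eq, mem_preimage,
      Pi.smul_apply, Pi.add_apply, smul_eq_mul, mem_Ioc, lt_inv_mul_iff₀ hε, inv_mul_le_iff₀ hε]
    refine forall_congr' fun i => and_congr ?_ ?_ <;> simp only [c] <;> constructor <;> intro h <;>
      linarith
  calc ∫ y in Ycell, φ (fun i => ε * ℓ i + ε * y i)
      = ∫ y in Ycell, (fun z => φ (c + z)) (ε • y) := rfl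
    _ = (ε ^ 3)⁻¹ • ∫ z in ε • Ycell, φ (c + z) := by
      rw [Measure.setIntegral_comp_smul_of_pos volume (fun z => φ (c + z)) Ycell hε,
        Module.finrank_fin_fun]
    _ = (ε ^ 3)⁻¹ • ∫ x in cellY ε ℓ, φ x := by
      rw [hscale, (measurePreserving_add_left volume c).setIntegral_preimage_emb
        (measurableEmbedding_addLeft c)]
    _ = ⨍ x in cellY ε ℓ, φ x := by
      rw [setAverage_eq, measureReal_def, volume_cellY hε.le, ENNReal.toReal_ofReal (by positivity)]

end Cells

section Unfolding

variable {Ω : Set (Fin 3 → ℝ)} {ε : ℝ}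

theorem OmegaMinus_subset (Ω : Set (Fin 3 → ℝ)) (ε : ℝ) : OmegaMinus Ω ε ⊆ Ω :=
  iUnion₂_subset fun _ h => h

theorem measurableSet_OmegaMinus (Ω : Set (Fin 3 → ℝ)) (ε : ℝ) :
    MeasurableSet (OmegaMinus Ω ε) :=
  .biUnion (to_countable _) fun ℓ _ => measurableSet_cellY ε ℓ

theorem OmegaMinus_eq_iUnion (Ω : Set (Fin 3 → ℝ)) (ε : ℝ) :
    OmegaMinus Ω ε = ⋃ ℓ : {ℓ // cellY ε ℓ ⊆ Ω}, cellY ε ℓ :=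
  biUnion_eq_iUnion _ _

theorem cellY_subset_OmegaMinus {ℓ : Fin 3 → ℤ} (hℓ : cellY ε ℓ ⊆ Ω) :
    cellY ε ℓ ⊆ OmegaMinus Ω ε :=
  subset_biUnion_of_mem (u := cellY ε) hℓ

theorem unfold_of_mem_cellY (hε : 0 < ε) {ℓ : Fin 3 → ℤ} (hℓ : cellY ε ℓ ⊆ Ω)
    {x : Fin 3 → ℝ} (hx : x ∈ cellY ε ℓ) (φ : (Fin 3 → ℝ) → ℝ) (y : Fin 3 → ℝ) :
    unfold ε Ω φ x y = φ (fun i => ε * ℓ i + ε * y i) := by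
  simp only [unfold, indicator_of_mem (cellY_subset_OmegaMinus hℓ hx),
    nint_div_eq_of_mem_cellY hε hx]

theorem setIntegral_Ycell_unfold_of_mem_cellY (hε : 0 < ε) {ℓ : Fin 3 → ℤ}
    (hℓ : cellY ε ℓ ⊆ Ω) {x : Fin 3 → ℝ} (hx : x ∈ cellY ε ℓ) (φ : (Fin 3 → ℝ) → ℝ) :
    ∫ y in Ycell, unfold ε Ω φ x y = ⨍ z in cellY ε ℓ, φ z := by
  simp_rw [unfold_of_mem_cellY hε hℓ hx]
  exact setIntegral_Ycell_comp_cellY hε ℓ φ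

theorem setIntegral_unfold_eq_setIntegral_OmegaMinus (ε : ℝ) (Ω : Set (Fin 3 → ℝ))
    (φ : (Fin 3 → ℝ) → ℝ) :
    ∫ x in Ω, ∫ y in Ycell, unfold ε Ω φ x y
      = ∫ x in OmegaMinus Ω ε, ∫ y in Ycell, unfold ε Ω φ x y := by
  have hsupp : (OmegaMinus Ω ε).indicator (fun x => ∫ y in Ycell, unfold ε Ω φ x y)
      = fun x => ∫ y in Ycell, unfold ε Ω φ x y :=
    indicator_eq_self.2 fun x hx => by_contra fun hxO => hx <| by
      simp only [unfold, indicator_of_notMem hxO, integral_zero]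
  conv_lhs => rw [← hsupp]
  rw [setIntegral_indicator (measurableSet_OmegaMinus Ω ε),
    inter_eq_self_of_subset_right (OmegaMinus_subset Ω ε)]

end Unfolding

theorem stmt6_general (Ω : Set (Fin 3 → ℝ))
    (ε : ℝ) (hε : 0 < ε) (φ : (Fin 3 → ℝ) → ℝ) (hφ : IntegrableOn φ Ω) :
    (volume Ycell).toReal⁻¹ * (∫ x in Ω, ∫ y in Ycell, unfold ε Ω φ x y)
        = ∫ x in OmegaMinus Ω ε, φ x ∧
      ∫ x in OmegaMinus Ω ε, φ x = (∫ x in Ω, φ x) - ∫ x in Ω \ OmegaMinus Ω ε, φ x := by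
  refine ⟨?_, by rw [setIntegral_sdiff (measurableSet_OmegaMinus Ω ε) hφ (OmegaMinus_subset Ω ε),
    sub_sub_cancel]⟩
  rw [volume_Ycell, ENNReal.toReal_one, inv_one, one_mul,
    setIntegral_unfold_eq_setIntegral_OmegaMinus, OmegaMinus_eq_iUnion]
  exact setIntegral_iUnion_of_eqOn_setAverage (s := fun ℓ : {ℓ // cellY ε ℓ ⊆ Ω} => cellY ε ℓ)
    (fun ℓ => measurableSet_cellY ε ℓ)
    ((pairwise_disjoint_cellY hε).comp_of_injective Subtype.val_injective)
    (fun ℓ => (volume_cellY hε.le ℓ).trans_ne ENNReal.ofReal_ne_top)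
    (hφ.mono_set (OmegaMinus_eq_iUnion Ω ε ▸ OmegaMinus_subset Ω ε))
    fun ℓ _ hx => setIntegral_Ycell_unfold_of_mem_cellY hε ℓ.2 hx φ

/-- Exact integration formula for the periodic unfolding operator: for `φ ∈ L¹(Ω)`,
`(1/|Y|) ∫_{Ω×Y} T_ε(φ) dx dy = ∫_{Ω_ε⁻} φ dx = ∫_Ω φ dx − ∫_{Λ_ε⁻} φ dx`. -/
theorem stmt6 (Ω : Set (Fin 3 → ℝ)) (hΩo : IsOpen Ω) (hΩb : Bornology.IsBounded Ω)
    (ε : ℝ) (hε : 0 < ε) (φ : (Fin 3 → ℝ) → ℝ) (hφ : IntegrableOn φ Ω) :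
    (volume Ycell).toReal⁻¹ * (∫ x in Ω, ∫ y in Ycell, unfold ε Ω φ x y)
        = ∫ x in OmegaMinus Ω ε, φ x ∧
      ∫ x in OmegaMinus Ω ε, φ x = (∫ x in Ω, φ x) - ∫ x in Ω \ OmegaMinus Ω ε, φ x :=
  stmt6_general Ω ε hε φ hφ
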